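/- arXiv:2212.05684 — 4 statements merged into one kernel-verified Lean document; each statement's English description precedes it below -/
import Mathlib

section
/- For every γ ≥ 0, the space D^{1,2} is continuously embedded into the weighted space L²_γ with norm ‖φ‖_{L²_γ} = (∫_ℝ |φ(s)|²/r_0(s)^{3+γ} ds)^{1/2}; moreover, for γ > 0 the embedding is compact, i.e., every sequence converging weakly to 0 in D^{1,2} converges strongly to 0 in L²_γ. -/
open MeasureTheory Filter

/-- `φ` belongs to the space `D^{1,2}`, with weak derivative `v ∈ L²(ℝ)`. -/
def IsD12 (φ v : ℝ → ℝ) : Prop :=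
  Continuous φ ∧ MeasureTheory.MemLp v 2 MeasureTheory.volume ∧
    ∀ s : ℝ, φ s = φ 0 + ∫ t in (0 : ℝ)..s, v t

/-!
Since `c (1 + |s|) ^ (2/3) ≤ r0 s`, we have `c ^ (3 + γ) (1 + |s|) ^ (2 + 2γ/3) ≤ r0 s ^ (3 + γ)`.

For `γ ≥ 0` it therefore suffices to bound `∫ φ² / (1 + |s|)²`. Write `φ = φ 0 + ∫₀ˢ v`; the
constant is integrable against `(1 + |s|)⁻²`, and the primitive is controlled by Hardy's
inequality `∫₀^∞ (∫₀ˢ v)² / (1 + s)² ≤ 4 ∫₀^∞ v²`: Cauchy–Schwarz with the weight `(1 + t)^(1/2)`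
gives `(∫₀ˢ v)² ≤ 2 (1 + s)^(1/2) ∫₀ˢ (1 + t)^(1/2) v²`, and after exchanging the order of
integration `∫ₜ^∞ (1 + s)^(-3/2) ds = 2 (1 + t)^(-1/2)` cancels the weight. The pointwise bound
`(∫₀ˢ v)² ≤ |s| ∫ v²` alone would not do here, as `|s| / (1 + |s|)²` is not integrable.

For `γ > 0` that pointwise bound gives the majorant `φ s ² / r0 s ^ (3 + γ) ≲ (1 + |s|)^(-1-2γ/3)`,
integrable and uniform along a bounded sequence, so dominated convergence turns pointwise
convergence into convergence in `L²_γ`.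
-/

open Set
open scoped ENNReal Interval

theorem sq_integral_mul_le {α : Type*} [MeasurableSpace α] {μ : Measure α} {f g : α → ℝ}
    (hf : MemLp f 2 μ) (hg : MemLp g 2 μ) :
    (∫ a, f a * g a ∂μ) ^ 2 ≤ (∫ a, f a ^ 2 ∂μ) * ∫ a, g a ^ 2 ∂μ := by
  have inner_eq : ∀ {u w : α → ℝ} (hu : MemLp u 2 μ) (hw : MemLp w 2 μ),
      inner ℝ (hu.toLp u) (hw.toLp w) = ∫ a, u a * w a ∂μ := by
    intro u w hu hw
    rw [L2.inner_def]
    refine integral_congr_ae ?_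
    filter_upwards [hu.coeFn_toLp, hw.coeFn_toLp] with a hua hwa
    simp [hua, hwa, mul_comm]
  have := real_inner_mul_inner_self_le (hf.toLp f) (hg.toLp g)
  rw [inner_eq, inner_eq, inner_eq] at this
  simpa only [sq] using this

theorem sq_intervalIntegral_le {v : ℝ → ℝ} (hv : MemLp v 2 volume) (a b : ℝ) :
    (∫ t in a..b, v t) ^ 2 ≤ |b - a| * ∫ t, v t ^ 2 := by
  have : IsFiniteMeasure (volume.restrict (Ι a b)) :=
    isFiniteMeasure_restrict.2 (by simp [Real.volume_uIoc])
  have hcs := sq_integral_mul_le (memLp_const (1 : ℝ)) (hv.restrict (Ι a b))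
  simp only [one_mul, one_pow, integral_const, smul_eq_mul, mul_one,
    measureReal_restrict_apply_univ] at hcs
  rw [measureReal_def, Real.volume_uIoc, ENNReal.toReal_ofReal (abs_nonneg _)] at hcs
  calc (∫ t in a..b, v t) ^ 2 = (∫ t in Ι a b, v t) ^ 2 := by
        rw [← sq_abs, intervalIntegral.abs_integral_eq_abs_integral_uIoc, sq_abs]
    _ ≤ |b - a| * ∫ t in Ι a b, v t ^ 2 := hcs
    _ ≤ |b - a| * ∫ t, v t ^ 2 := mul_le_mul_of_nonneg_left
        (setIntegral_le_integral hv.integrable_sq (.of_forall fun t => sq_nonneg _)) (abs_nonneg _)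

theorem sq_intervalIntegral_le_weighted {v : ℝ → ℝ} (hv : MemLp v 2 volume) {s : ℝ}
    (hs : 0 ≤ s) :
    (∫ t in 0..s, v t) ^ 2 ≤
      2 * (1 + s) ^ (1 / 2 : ℝ) * ∫ t in Ioc 0 s, (1 + t) ^ (1 / 2 : ℝ) * v t ^ 2 := by
  have : IsFiniteMeasure (volume.restrict (Ioc 0 s)) :=
    isFiniteMeasure_restrict.2 measure_Ioc_lt_top.ne
  have hpow : ∀ p : ℝ, Measurable fun t : ℝ => (1 + t) ^ p := fun p =>
    (measurable_const.add measurable_id).pow_const p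
  have hf : MemLp (fun t => (1 + t) ^ (-1 / 4 : ℝ)) 2 (volume.restrict (Ioc 0 s)) := by
    refine .of_bound (hpow _).aestronglyMeasurable 1 ?_
    filter_upwards [ae_restrict_mem measurableSet_Ioc] with t ht
    rw [Real.norm_of_nonneg (Real.rpow_nonneg (by linarith [ht.1]) _)]
    exact Real.rpow_le_one_of_one_le_of_nonpos (by linarith [ht.1]) (by norm_num)
  have hg : MemLp (fun t => (1 + t) ^ (1 / 4 : ℝ) * v t) 2 (volume.restrict (Ioc 0 s)) := by
    refine (hv.restrict _).mul'
      (memLp_top_of_bound (hpow _).aestronglyMeasurable ((1 + s) ^ (1 / 4 : ℝ)) ?_)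
    filter_upwards [ae_restrict_mem measurableSet_Ioc] with t ht
    rw [Real.norm_of_nonneg (Real.rpow_nonneg (by linarith [ht.1]) _)]
    exact Real.rpow_le_rpow (by linarith [ht.1]) (by linarith [ht.2]) (by norm_num)
  have hfg : ∫ t in Ioc 0 s, (1 + t) ^ (-1 / 4 : ℝ) * ((1 + t) ^ (1 / 4 : ℝ) * v t)
      = ∫ t in 0..s, v t := by
    rw [intervalIntegral.integral_of_le hs]
    refine setIntegral_congr_fun measurableSet_Ioc fun t ht => ?_
    rw [← mul_assoc, ← Real.rpow_add (by linarith [ht.1])]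
    norm_num
  have hf2 : ∫ t in Ioc 0 s, ((1 + t) ^ (-1 / 4 : ℝ)) ^ 2 ≤ 2 * (1 + s) ^ (1 / 2 : ℝ) := by
    have hprim :
        ∫ t in (0 : ℝ)..s, (1 + t) ^ (-1 / 2 : ℝ) = 2 * ((1 + s) ^ (1 / 2 : ℝ) - 1) := by
      rw [intervalIntegral.integral_comp_add_left (fun x : ℝ => x ^ (-1 / 2 : ℝ)) 1,
        integral_rpow (Or.inl (by norm_num))]
      norm_num
      ring
    rw [← intervalIntegral.integral_of_le hs]
    calc ∫ t in (0 : ℝ)..s, ((1 + t) ^ (-1 / 4 : ℝ)) ^ 2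
        = ∫ t in (0 : ℝ)..s, (1 + t) ^ (-1 / 2 : ℝ) := by
          refine intervalIntegral.integral_congr fun t ht => ?_
          rw [uIcc_of_le hs] at ht
          rw [← Real.rpow_natCast, ← Real.rpow_mul (by linarith [ht.1])]
          norm_num
      _ ≤ 2 * (1 + s) ^ (1 / 2 : ℝ) := by rw [hprim]; linarith
  have hg2 : ∫ t in Ioc 0 s, ((1 + t) ^ (1 / 4 : ℝ) * v t) ^ 2
      = ∫ t in Ioc 0 s, (1 + t) ^ (1 / 2 : ℝ) * v t ^ 2 := by
    refine setIntegral_congr_fun measurableSet_Ioc fun t ht => ?_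
    rw [mul_pow, ← Real.rpow_natCast, ← Real.rpow_mul (by linarith [ht.1])]
    norm_num
  have hcs := sq_integral_mul_le hf hg
  rw [hfg, hg2] at hcs
  refine hcs.trans (mul_le_mul_of_nonneg_right hf2 ?_)
  exact setIntegral_nonneg measurableSet_Ioc fun t ht =>
    mul_nonneg (Real.rpow_nonneg (by linarith [ht.1]) _) (sq_nonneg _)

theorem lintegral_Ici_one_add_rpow {a t : ℝ} (ha : a < -1) (ht : -1 < t) :
    ∫⁻ s in Ici t, ENNReal.ofReal ((1 + s) ^ a) =
      ENNReal.ofReal (-(1 + t) ^ (a + 1) / (a + 1)) := by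
  have h1t : 0 < 1 + t := by linarith
  have hshift :=
    (measurePreserving_add_left (volume : Measure ℝ) 1).setLIntegral_comp_preimage_emb
      (measurableEmbedding_addLeft 1) (fun u => ENNReal.ofReal (u ^ a)) (Ioi (1 + t))
  rw [preimage_const_add_Ioi, add_sub_cancel_left] at hshift
  rw [← setLIntegral_congr Ioi_ae_eq_Ici, hshift,
    ← ofReal_integral_eq_lintegral_ofReal (integrableOn_Ioi_rpow_of_lt ha h1t),
    integral_Ioi_rpow_of_lt ha h1t]
  filter_upwards [ae_restrict_mem measurableSet_Ioi] with u hu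
  exact Real.rpow_nonneg (h1t.trans hu).le _

theorem lintegral_Ioi_mul_lintegral_Ioc {G W : ℝ → ℝ≥0∞} (hG : Measurable G)
    (hW : AEMeasurable W) (a : ℝ) :
    ∫⁻ s in Ioi a, G s * ∫⁻ t in Ioc a s, W t =
      ∫⁻ t in Ioi a, W t * ∫⁻ s in Ici t, G s := by
  set K : ℝ × ℝ → ℝ≥0∞ := {p | p.2 ≤ p.1}.indicator fun p => G p.1 * W p.2
  have hK : AEMeasurable K ((volume.restrict (Ioi a)).prod (volume.restrict (Ioi a))) :=
    ((hG.comp measurable_fst).aemeasurable.mul hW.restrict.comp_snd).indicator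
      (measurableSet_le measurable_snd measurable_fst)
  have inner_t : ∀ s, G s * ∫⁻ t in Ioc a s, W t = ∫⁻ t in Ioi a, K (s, t) := fun s => by
    rw [← lintegral_const_mul'' _ hW.restrict, ← Ioi_inter_Iic, inter_comm,
      ← setLIntegral_indicator measurableSet_Iic]
    rfl
  have inner_s : ∀ t ∈ Ioi a, W t * ∫⁻ s in Ici t, G s = ∫⁻ s in Ioi a, K (s, t) := by
    intro t ht
    rw [mul_comm, ← lintegral_mul_const _ hG, ← inter_eq_left.2 (Ici_subset_Ioi.2 ht),
      ← setLIntegral_indicator measurableSet_Ici]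
    rfl
  rw [lintegral_congr inner_t, setLIntegral_congr_fun measurableSet_Ioi inner_s]
  exact lintegral_lintegral_swap (f := fun s t => K (s, t)) hK

theorem ofReal_sq_intervalIntegral_div_sq_le {v : ℝ → ℝ} (hv : MemLp v 2 volume) {s : ℝ}
    (hs : 0 ≤ s) :
    ENNReal.ofReal ((∫ t in 0..s, v t) ^ 2 / (1 + s) ^ 2) ≤
      2 * (ENNReal.ofReal ((1 + s) ^ (-3 / 2 : ℝ)) *
        ∫⁻ t in Ioc 0 s, ENNReal.ofReal ((1 + t) ^ (1 / 2 : ℝ) * v t ^ 2)) := by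
  have h1s : 0 < 1 + s := by linarith
  have hint : IntegrableOn (fun t => (1 + t) ^ (1 / 2 : ℝ) * v t ^ 2) (Ioc 0 s) := by
    refine hv.integrable_sq.restrict.bdd_mul (c := (1 + s) ^ (1 / 2 : ℝ))
      ((measurable_const.add measurable_id).pow_const _).aestronglyMeasurable ?_
    filter_upwards [ae_restrict_mem measurableSet_Ioc] with t ht
    rw [Real.norm_of_nonneg (Real.rpow_nonneg (by linarith [ht.1]) _)]
    exact Real.rpow_le_rpow (by linarith [ht.1]) (by linarith [ht.2]) (by norm_num)
  have hint_nonneg :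
      0 ≤ᵐ[volume.restrict (Ioc 0 s)] fun t => (1 + t) ^ (1 / 2 : ℝ) * v t ^ 2 := by
    filter_upwards [ae_restrict_mem measurableSet_Ioc] with t ht
    exact mul_nonneg (Real.rpow_nonneg (by linarith [ht.1]) _) (sq_nonneg _)
  have hpow : (1 + s) ^ (1 / 2 : ℝ) / (1 + s) ^ 2 = (1 + s) ^ (-3 / 2 : ℝ) := by
    rw [← Real.rpow_natCast, ← Real.rpow_sub h1s]
    norm_num
  rw [← ofReal_integral_eq_lintegral_ofReal hint hint_nonneg,
    ← ENNReal.ofReal_mul (by positivity), ← ENNReal.ofReal_ofNat,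
    ← ENNReal.ofReal_mul zero_le_two]
  refine ENNReal.ofReal_le_ofReal ?_
  calc (∫ t in 0..s, v t) ^ 2 / (1 + s) ^ 2
      ≤ 2 * (1 + s) ^ (1 / 2 : ℝ) * (∫ t in Ioc 0 s, (1 + t) ^ (1 / 2 : ℝ) * v t ^ 2)
        / (1 + s) ^ 2 := by
        gcongr
        exact sq_intervalIntegral_le_weighted hv hs
    _ = _ := by rw [← hpow]; ring

theorem lintegral_Ioi_sq_intervalIntegral_div_sq_le {v : ℝ → ℝ} (hv : MemLp v 2 volume) :
    ∫⁻ s in Ioi 0, ENNReal.ofReal ((∫ t in 0..s, v t) ^ 2 / (1 + s) ^ 2) ≤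
      4 * ∫⁻ t in Ioi 0, ENNReal.ofReal (v t ^ 2) := by
  set G : ℝ → ℝ≥0∞ := fun s => ENNReal.ofReal ((1 + s) ^ (-3 / 2 : ℝ))
  set W : ℝ → ℝ≥0∞ := fun t => ENNReal.ofReal ((1 + t) ^ (1 / 2 : ℝ) * v t ^ 2)
  have hG : Measurable G := ((measurable_const.add measurable_id).pow_const _).ennreal_ofReal
  have hW : AEMeasurable W :=
    (((measurable_const.add measurable_id).pow_const _).aemeasurable.mul
      (hv.1.aemeasurable.pow_const 2)).ennreal_ofReal
  have tail :
      ∀ t ∈ Ioi (0 : ℝ), W t * ∫⁻ s in Ici t, G s = 2 * ENNReal.ofReal (v t ^ 2) := by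
    intro t ht
    have h1t : 0 < 1 + t := by linarith [mem_Ioi.1 ht]
    rw [lintegral_Ici_one_add_rpow (by norm_num) (by linarith), ← ENNReal.ofReal_mul
      (by positivity), ← ENNReal.ofReal_ofNat, ← ENNReal.ofReal_mul zero_le_two]
    congr 1
    have : (1 + t) ^ (1 / 2 : ℝ) * (1 + t) ^ (-3 / 2 + 1 : ℝ) = 1 := by
      rw [← Real.rpow_add h1t]; norm_num
    linear_combination (2 * v t ^ 2) * this
  calc ∫⁻ s in Ioi 0, ENNReal.ofReal ((∫ t in 0..s, v t) ^ 2 / (1 + s) ^ 2)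
      ≤ ∫⁻ s in Ioi 0, 2 * (G s * ∫⁻ t in Ioc 0 s, W t) :=
        setLIntegral_mono' measurableSet_Ioi fun s hs =>
          ofReal_sq_intervalIntegral_div_sq_le hv (mem_Ioi.1 hs).le
    _ = 2 * ∫⁻ t in Ioi 0, W t * ∫⁻ s in Ici t, G s := by
        rw [lintegral_const_mul' _ _ ENNReal.ofNat_ne_top, lintegral_Ioi_mul_lintegral_Ioc hG hW]
    _ = 4 * ∫⁻ t in Ioi 0, ENNReal.ofReal (v t ^ 2) := by
        rw [setLIntegral_congr_fun measurableSet_Ioi tail,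
          lintegral_const_mul' _ _ ENNReal.ofNat_ne_top, ← mul_assoc]
        norm_num

theorem lintegral_sq_intervalIntegral_div_sq_le {v : ℝ → ℝ} (hv : MemLp v 2 volume) :
    ∫⁻ s, ENNReal.ofReal ((∫ t in 0..s, v t) ^ 2 / (1 + |s|) ^ 2) ≤
      8 * ∫⁻ t, ENNReal.ofReal (v t ^ 2) := by
  have half : ∀ w : ℝ → ℝ, MemLp w 2 volume →
      ∫⁻ s in Ioi 0, ENNReal.ofReal ((∫ t in 0..s, w t) ^ 2 / (1 + |s|) ^ 2) ≤
        4 * ∫⁻ t, ENNReal.ofReal (w t ^ 2) := by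
    intro w hw
    rw [setLIntegral_congr_fun measurableSet_Ioi (fun s hs => by rw [abs_of_pos (mem_Ioi.1 hs)])]
    exact (lintegral_Ioi_sq_intervalIntegral_div_sq_le hw).trans
      (mul_le_mul_right (setLIntegral_le_lintegral _ _) _)
  set h : ℝ → ℝ≥0∞ := fun s => ENNReal.ofReal ((∫ t in 0..s, v t) ^ 2 / (1 + |s|) ^ 2)
  have hneg := Measure.measurePreserving_neg (volume : Measure ℝ)
  have left : ∫⁻ s in Iic 0, h s ≤ 4 * ∫⁻ t, ENNReal.ofReal (v t ^ 2) := by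
    have hreflect := hneg.setLIntegral_comp_preimage_emb
      (MeasurableEquiv.neg ℝ).measurableEmbedding h (Iio 0)
    rw [neg_preimage, neg_Iio, neg_zero] at hreflect
    have hflip : ∀ s, h (-s) = ENNReal.ofReal ((∫ t in 0..s, v (-t)) ^ 2 / (1 + |s|) ^ 2) := by
      intro s
      rw [intervalIntegral.integral_comp_neg, neg_zero, intervalIntegral.integral_symm,
        neg_sq, ← abs_neg s]
    rw [← setLIntegral_congr Iio_ae_eq_Iic, ← hreflect, lintegral_congr hflip,
      ← hneg.lintegral_comp_emb (MeasurableEquiv.neg ℝ).measurableEmbedding]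
    exact half _ (hv.comp_measurePreserving hneg)
  calc ∫⁻ s, h s = (∫⁻ s in Ioi 0, h s) + ∫⁻ s in Iic 0, h s := by
        rw [← lintegral_add_compl h (measurableSet_Ioi (a := 0)), compl_Ioi]
    _ ≤ (4 * ∫⁻ t, ENNReal.ofReal (v t ^ 2)) + 4 * ∫⁻ t, ENNReal.ofReal (v t ^ 2) :=
        add_le_add (half v hv) left
    _ = 8 * ∫⁻ t, ENNReal.ofReal (v t ^ 2) := by ring

theorem continuous_primitive_of_memLp {v : ℝ → ℝ} (hv : MemLp v 2 volume) :
    Continuous fun s => ∫ t in 0..s, v t :=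
  intervalIntegral.continuous_primitive (fun _ _ =>
    ((hv.locallyIntegrable one_le_two).integrableOn_isCompact isCompact_uIcc).intervalIntegrable) 0

theorem integrable_sq_intervalIntegral_div_sq {v : ℝ → ℝ} (hv : MemLp v 2 volume) :
    Integrable fun s => (∫ t in 0..s, v t) ^ 2 / (1 + |s|) ^ 2 := by
  have hF := (continuous_primitive_of_memLp hv).measurable
  refine ⟨Measurable.aestronglyMeasurable (by fun_prop), ?_⟩
  rw [hasFiniteIntegral_iff_ofReal (.of_forall fun s => by positivity)]
  exact (lintegral_sq_intervalIntegral_div_sq_le hv).trans_lt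
    (ENNReal.mul_lt_top ENNReal.ofNat_lt_top hv.integrable_sq.lintegral_lt_top)

theorem integral_sq_intervalIntegral_div_sq_le {v : ℝ → ℝ} (hv : MemLp v 2 volume) :
    ∫ s, (∫ t in 0..s, v t) ^ 2 / (1 + |s|) ^ 2 ≤ 8 * ∫ t, v t ^ 2 := by
  rw [integral_eq_lintegral_of_nonneg_ae (.of_forall fun s => by positivity)
      (integrable_sq_intervalIntegral_div_sq hv).1,
    integral_eq_lintegral_of_nonneg_ae (.of_forall fun t => by positivity) hv.integrable_sq.1,
    ← ENNReal.toReal_ofNat 8, ← ENNReal.toReal_mul]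
  exact ENNReal.toReal_mono
    (ENNReal.mul_ne_top ENNReal.ofNat_ne_top hv.integrable_sq.lintegral_lt_top.ne)
    (lintegral_sq_intervalIntegral_div_sq_le hv)

theorem integrable_inv_one_add_abs_sq : Integrable fun s : ℝ => ((1 + |s|) ^ 2)⁻¹ := by
  refine (integrable_one_add_norm (E := ℝ) (μ := volume) (r := 2) (by norm_num)).congr
    (.of_forall fun s => ?_)
  dsimp only
  rw [Real.norm_eq_abs, Real.rpow_neg (by positivity), Real.rpow_two]

theorem mul_one_add_abs_rpow_le_rpow {r c s P : ℝ} (hc : 0 ≤ c) (hP : 0 ≤ P)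
    (h : c * (1 + |s|) ^ (2 / 3 : ℝ) ≤ r) : c ^ P * (1 + |s|) ^ (2 * P / 3) ≤ r ^ P := by
  have h1s : 0 < 1 + |s| := by positivity
  calc c ^ P * (1 + |s|) ^ (2 * P / 3) = (c * (1 + |s|) ^ (2 / 3 : ℝ)) ^ P := by
        rw [Real.mul_rpow hc (by positivity), ← Real.rpow_mul h1s.le]
        ring_nf
    _ ≤ r ^ P := Real.rpow_le_rpow (by positivity) h hP

namespace IsD12

variable {φ v : ℝ → ℝ}

theorem sq_le (h : IsD12 φ v) (s : ℝ) :
    φ s ^ 2 ≤ 2 * (φ 0 ^ 2 + ∫ t, v t ^ 2) * (1 + |s|) := by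
  obtain ⟨-, hv, hφ⟩ := h
  have hF := sq_intervalIntegral_le hv 0 s
  have hI : 0 ≤ ∫ t, v t ^ 2 := integral_nonneg fun t => sq_nonneg _
  rw [sub_zero] at hF
  rw [hφ s]
  nlinarith [sq_nonneg (φ 0 - ∫ t in 0..s, v t), abs_nonneg s, sq_nonneg (φ 0)]

theorem sq_div_sq_le (h : IsD12 φ v) (s : ℝ) :
    φ s ^ 2 / (1 + |s|) ^ 2 ≤
      2 * φ 0 ^ 2 * ((1 + |s|) ^ 2)⁻¹ + 2 * ((∫ t in 0..s, v t) ^ 2 / (1 + |s|) ^ 2) := by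
  have hnum : φ s ^ 2 ≤ 2 * φ 0 ^ 2 + 2 * (∫ t in 0..s, v t) ^ 2 := by
    rw [h.2.2 s]
    nlinarith [sq_nonneg (φ 0 - ∫ t in 0..s, v t)]
  calc φ s ^ 2 / (1 + |s|) ^ 2
      ≤ (2 * φ 0 ^ 2 + 2 * (∫ t in 0..s, v t) ^ 2) / (1 + |s|) ^ 2 := by gcongr
    _ = _ := by rw [add_div, div_eq_mul_inv, mul_div_assoc]

theorem integrable_sq_div_sq (h : IsD12 φ v) :
    Integrable fun s => φ s ^ 2 / (1 + |s|) ^ 2 := by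
  refine ((integrable_inv_one_add_abs_sq.const_mul (2 * φ 0 ^ 2)).add
    ((integrable_sq_intervalIntegral_div_sq h.2.1).const_mul 2)).mono' ?_
    (.of_forall fun s => ?_)
  · have hφ := h.1.measurable
    exact Measurable.aestronglyMeasurable (by fun_prop)
  · rw [Real.norm_of_nonneg (by positivity)]
    exact h.sq_div_sq_le s

theorem integral_sq_div_sq_le (h : IsD12 φ v) :
    ∫ s, φ s ^ 2 / (1 + |s|) ^ 2 ≤
      2 * ((∫ s : ℝ, ((1 + |s|) ^ 2)⁻¹) + 8) * (φ 0 ^ 2 + ∫ t, v t ^ 2) := by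
  have hv := h.2.1
  have hM : 0 ≤ ∫ s : ℝ, ((1 + |s|) ^ 2)⁻¹ := integral_nonneg fun s => by positivity
  have hI : 0 ≤ ∫ t, v t ^ 2 := integral_nonneg fun t => sq_nonneg _
  calc ∫ s, φ s ^ 2 / (1 + |s|) ^ 2
      ≤ ∫ s, (2 * φ 0 ^ 2 * ((1 + |s|) ^ 2)⁻¹ +
          2 * ((∫ t in 0..s, v t) ^ 2 / (1 + |s|) ^ 2)) :=
        integral_mono h.integrable_sq_div_sq ((integrable_inv_one_add_abs_sq.const_mul _).add
          ((integrable_sq_intervalIntegral_div_sq hv).const_mul 2)) h.sq_div_sq_le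
    _ = 2 * φ 0 ^ 2 * (∫ s : ℝ, ((1 + |s|) ^ 2)⁻¹) +
          2 * ∫ s, (∫ t in 0..s, v t) ^ 2 / (1 + |s|) ^ 2 := by
        rw [integral_add (integrable_inv_one_add_abs_sq.const_mul _)
          ((integrable_sq_intervalIntegral_div_sq hv).const_mul 2), integral_const_mul,
          integral_const_mul]
    _ ≤ 2 * φ 0 ^ 2 * (∫ s : ℝ, ((1 + |s|) ^ 2)⁻¹) + 2 * (8 * ∫ t, v t ^ 2) := by
        gcongr
        exact integral_sq_intervalIntegral_div_sq_le hv
    _ ≤ _ := by nlinarith [mul_nonneg hM hI, sq_nonneg (φ 0)]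

theorem sq_div_rpow_le (h : IsD12 φ v) {r c s γ : ℝ} (hc : 0 < c) (hγ : 0 ≤ γ)
    (hr : c * (1 + |s|) ^ (2 / 3 : ℝ) ≤ r) :
    φ s ^ 2 / r ^ (3 + γ) ≤
      2 * (φ 0 ^ 2 + ∫ t, v t ^ 2) / c ^ (3 + γ) * (1 + |s|) ^ (-(1 + 2 * γ / 3)) := by
  have h1s : 0 < 1 + |s| := by positivity
  have hexp : (1 + |s|) ^ (-(1 + 2 * γ / 3)) = (1 + |s|) / (1 + |s|) ^ (2 * (3 + γ) / 3) := by
    rw [eq_div_iff (Real.rpow_pos_of_pos h1s _).ne', ← Real.rpow_add h1s,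
      show -(1 + 2 * γ / 3) + 2 * (3 + γ) / 3 = 1 by ring, Real.rpow_one]
  have hI : 0 ≤ ∫ t, v t ^ 2 := integral_nonneg fun t => sq_nonneg _
  calc φ s ^ 2 / r ^ (3 + γ)
      ≤ 2 * (φ 0 ^ 2 + ∫ t, v t ^ 2) * (1 + |s|) /
          (c ^ (3 + γ) * (1 + |s|) ^ (2 * (3 + γ) / 3)) :=
        div_le_div₀ (by positivity) (h.sq_le s) (by positivity)
          (mul_one_add_abs_rpow_le_rpow hc.le (by positivity) hr)
    _ = _ := by rw [hexp]; field_simp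

end IsD12

theorem exists_integral_sq_div_rpow_le (r0 : ℝ → ℝ) {c : ℝ} (hc : 0 < c)
    (hlow : ∀ s : ℝ, c * (1 + |s|) ^ ((2 : ℝ) / 3) ≤ r0 s) {γ : ℝ} (hγ : 0 ≤ γ) :
    ∃ K : ℝ, 0 < K ∧ ∀ φ v : ℝ → ℝ, IsD12 φ v →
      ∫ s, φ s ^ 2 / r0 s ^ ((3 : ℝ) + γ) ≤ K * (φ 0 ^ 2 + ∫ t, v t ^ 2) := by
  set P : ℝ := 3 + γ
  set M : ℝ := ∫ s : ℝ, ((1 + |s|) ^ 2)⁻¹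
  have hcP : 0 < c ^ P := Real.rpow_pos_of_pos hc P
  have hden : ∀ s : ℝ, c ^ P * (1 + |s|) ^ 2 ≤ r0 s ^ P := fun s => by
    refine le_trans ?_ (mul_one_add_abs_rpow_le_rpow hc.le (by positivity) (hlow s))
    rw [← Real.rpow_two]
    gcongr
    · linarith [abs_nonneg s]
    · linarith
  have hM : 0 ≤ M := integral_nonneg fun s => by positivity
  refine ⟨(c ^ P)⁻¹ * (2 * (M + 8)), by positivity, fun φ v h => ?_⟩
  calc ∫ s, φ s ^ 2 / r0 s ^ P ≤ ∫ s, (c ^ P)⁻¹ * (φ s ^ 2 / (1 + |s|) ^ 2) := by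
        refine integral_mono_of_nonneg (.of_forall fun s => ?_)
          (h.integrable_sq_div_sq.const_mul _) (.of_forall fun s => ?_)
        · exact div_nonneg (sq_nonneg _)
            ((by positivity : 0 ≤ c ^ P * (1 + |s|) ^ 2).trans (hden s))
        · dsimp only
          rw [← div_eq_inv_mul, div_div, mul_comm ((1 + |s|) ^ 2)]
          exact div_le_div_of_nonneg_left (sq_nonneg _) (by positivity) (hden s)
    _ ≤ (c ^ P)⁻¹ * (2 * (M + 8)) * (φ 0 ^ 2 + ∫ t, v t ^ 2) := by
        rw [integral_const_mul, mul_assoc]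
        exact mul_le_mul_of_nonneg_left h.integral_sq_div_sq_le (inv_nonneg.2 hcP.le)

theorem tendsto_integral_sq_div_rpow (r0 : ℝ → ℝ) {c : ℝ} (hc : 0 < c) (hr0c : Continuous r0)
    (hlow : ∀ s : ℝ, c * (1 + |s|) ^ ((2 : ℝ) / 3) ≤ r0 s) {γ : ℝ} (hγ : 0 < γ)
    {φ v : ℕ → ℝ → ℝ} (hD : ∀ n, IsD12 (φ n) (v n))
    (hK : ∃ K : ℝ, ∀ n, φ n 0 ^ 2 + ∫ t, v n t ^ 2 ≤ K)
    (hconv : ∀ s : ℝ, Tendsto (fun n => φ n s) atTop (nhds 0)) :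
    Tendsto (fun n => ∫ s, φ n s ^ 2 / r0 s ^ ((3 : ℝ) + γ)) atTop (nhds 0) := by
  obtain ⟨K, hK⟩ := hK
  set P : ℝ := 3 + γ
  have hr0 : ∀ s, 0 < r0 s := fun s =>
    (by positivity : 0 < c * (1 + |s|) ^ ((2 : ℝ) / 3)).trans_le (hlow s)
  set g : ℝ → ℝ := fun s => 2 * K / c ^ P * (1 + |s|) ^ (-(1 + 2 * γ / 3))
  have hg : Integrable g := by
    refine (integrable_one_add_norm (E := ℝ) (μ := volume) (r := 1 + 2 * γ / 3) ?_).const_mul _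
    simp only [Module.finrank_self, Nat.cast_one]
    linarith
  have hmeas : ∀ n, AEStronglyMeasurable (fun s => φ n s ^ 2 / r0 s ^ P) := fun n =>
    (((hD n).1.pow 2).div (hr0c.rpow_const fun s => Or.inl (hr0 s).ne') fun s =>
      (Real.rpow_pos_of_pos (hr0 s) P).ne').aestronglyMeasurable
  have hbound : ∀ n s, ‖φ n s ^ 2 / r0 s ^ P‖ ≤ g s := fun n s => by
    rw [Real.norm_of_nonneg (div_nonneg (sq_nonneg _) (Real.rpow_pos_of_pos (hr0 s) P).le)]
    refine ((hD n).sq_div_rpow_le hc hγ.le (hlow s)).trans ?_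
    simp only [g]
    gcongr
    exact hK n
  have hlim : ∀ s, Tendsto (fun n => φ n s ^ 2 / r0 s ^ P) atTop (nhds 0) := fun s => by
    simpa using ((hconv s).pow 2).div_const (r0 s ^ P)
  simpa using tendsto_integral_of_dominated_convergence g hmeas hg
    (fun n => .of_forall (hbound n)) (.of_forall hlim)

theorem stmt3_general (r0 : ℝ → ℝ) (c : ℝ) (hc : 0 < c)
    (hr0c : Continuous r0)
    (hlow : ∀ s : ℝ, c * (1 + |s|) ^ ((2 : ℝ) / 3) ≤ r0 s) :
    -- continuous embedding into L²_γ for γ ≥ 0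
    (∀ γ : ℝ, 0 ≤ γ → ∃ K : ℝ, 0 < K ∧ ∀ φ v : ℝ → ℝ, IsD12 φ v →
        (∫ s : ℝ, (φ s) ^ 2 / (r0 s) ^ ((3 : ℝ) + γ)) ≤
          K * ((φ 0) ^ 2 + ∫ t : ℝ, (v t) ^ 2)) ∧
    -- compact embedding for γ > 0: bounded sequences converging weakly (here:
    -- pointwise) to 0 converge strongly to 0 in L²_γ
    (∀ γ : ℝ, 0 < γ → ∀ (φ : ℕ → ℝ → ℝ) (v : ℕ → ℝ → ℝ),
        (∀ n, IsD12 (φ n) (v n)) →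
        (∃ K : ℝ, ∀ n, (φ n 0) ^ 2 + ∫ t : ℝ, (v n t) ^ 2 ≤ K) →
        (∀ s : ℝ, Tendsto (fun n => φ n s) atTop (nhds 0)) →
        Tendsto (fun n => ∫ s : ℝ, (φ n s) ^ 2 / (r0 s) ^ ((3 : ℝ) + γ))
          atTop (nhds 0)) :=
  ⟨fun _ hγ => exists_integral_sq_div_rpow_le r0 hc hlow hγ,
    fun _ hγ _ _ hD hK hconv => tendsto_integral_sq_div_rpow r0 hc hr0c hlow hγ hD hK hconv⟩

theorem stmt3 (r0 : ℝ → ℝ) (c C : ℝ) (hc : 0 < c) (hC : 0 < C)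
    (hr0c : Continuous r0)
    (hlow : ∀ s : ℝ, c * (1 + |s|) ^ ((2 : ℝ) / 3) ≤ r0 s)
    (hup : ∀ s : ℝ, r0 s ≤ C * (1 + |s|) ^ ((2 : ℝ) / 3)) :
    -- continuous embedding into L²_γ for γ ≥ 0
    (∀ γ : ℝ, 0 ≤ γ → ∃ K : ℝ, 0 < K ∧ ∀ φ v : ℝ → ℝ, IsD12 φ v →
        (∫ s : ℝ, (φ s) ^ 2 / (r0 s) ^ ((3 : ℝ) + γ)) ≤
          K * ((φ 0) ^ 2 + ∫ t : ℝ, (v t) ^ 2)) ∧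
    -- compact embedding for γ > 0: bounded sequences converging weakly (here:
    -- pointwise) to 0 converge strongly to 0 in L²_γ
    (∀ γ : ℝ, 0 < γ → ∀ (φ : ℕ → ℝ → ℝ) (v : ℕ → ℝ → ℝ),
        (∀ n, IsD12 (φ n) (v n)) →
        (∃ K : ℝ, ∀ n, (φ n 0) ^ 2 + ∫ t : ℝ, (v n t) ^ 2 ≤ K) →
        (∀ s : ℝ, Tendsto (fun n => φ n s) atTop (nhds 0)) →
        Tendsto (fun n => ∫ s : ℝ, (φ n s) ^ 2 / (r0 s) ^ ((3 : ℝ) + γ))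
          atTop (nhds 0)) :=
  stmt3_general r0 c hc hr0c hlow
end

section
/- Let G ≠ 0 and let r : ℝ → ℝ_+ be a C² solution of r̈ = G²/r³ − r/(r² + ρ(t)²)^{3/2} (with ρ : ℝ → [0,1/2] continuous) which is homoclinic to infinity, i.e., r(s) → ∞ and ṙ(s) → 0 as s → ±∞. Then r(s) ≥ G²/2 for all s ∈ ℝ. -/
open Filter

set_option maxHeartbeats 2000000 in
theorem stmt6 (G : ℝ) (hG : G ≠ 0) (ρ r r' r'' : ℝ → ℝ)
    (hρc : Continuous ρ) (hρ : ∀ t : ℝ, ρ t ∈ Set.Icc (0 : ℝ) (1 / 2))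
    (hrpos : ∀ s : ℝ, 0 < r s)
    (hd1 : ∀ s : ℝ, HasDerivAt r (r' s) s)
    (hd2 : ∀ s : ℝ, HasDerivAt r' (r'' s) s)
    (hr''c : Continuous r'')
    (heq : ∀ s : ℝ,
      r'' s = G ^ 2 / (r s) ^ 3 - r s / ((r s) ^ 2 + (ρ s) ^ 2) ^ ((3 : ℝ) / 2))
    (hinf1 : Tendsto r atTop atTop) (hinf2 : Tendsto r atBot atTop)
    (hv1 : Tendsto r' atTop (nhds 0)) (hv2 : Tendsto r' atBot (nhds 0)) :
    ∀ s : ℝ, G ^ 2 / 2 ≤ r s := by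
  -- continuity facts
  have hrc : Continuous r := continuous_iff_continuousAt.mpr fun s => (hd1 s).continuousAt
  have hr'c : Continuous r' := continuous_iff_continuousAt.mpr fun s => (hd2 s).continuousAt
  -- key pointwise bound : r'' t ≥ G²/r³ - 1/r²
  have hpow : ∀ t : ℝ, ((r t) ^ 2 : ℝ) ^ ((3 : ℝ) / 2) = (r t) ^ 3 := by
    intro t
    rw [← Real.rpow_natCast (r t) 2, ← Real.rpow_mul (hrpos t).le,
      ← Real.rpow_natCast (r t) 3]
    norm_num
  have hbound : ∀ t : ℝ, r t / ((r t) ^ 2 + (ρ t) ^ 2) ^ ((3 : ℝ) / 2) ≤ 1 / (r t) ^ 2 := by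
    intro t
    have h1 : (r t) ^ 3 ≤ ((r t) ^ 2 + (ρ t) ^ 2) ^ ((3 : ℝ) / 2) := by
      rw [← hpow t]
      exact Real.rpow_le_rpow (sq_nonneg _) (by nlinarith [sq_nonneg (ρ t)]) (by norm_num)
    have hD : (0 : ℝ) < ((r t) ^ 2 + (ρ t) ^ 2) ^ ((3 : ℝ) / 2) := by
      have : (0:ℝ) < (r t) ^ 3 := pow_pos (hrpos t) 3
      linarith
    rw [div_le_div_iff₀ hD (pow_pos (hrpos t) 2)]
    nlinarith [hrpos t]
  have hgnn : ∀ t : ℝ, 0 ≤ r'' t - G ^ 2 / (r t) ^ 3 + 1 / (r t) ^ 2 := by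
    intro t
    have := hbound t
    rw [heq t]
    linarith
  -- the energy
  set E : ℝ → ℝ := fun t => r' t ^ 2 / 2 + G ^ 2 / 2 * ((r t) ^ 2)⁻¹ - (r t)⁻¹ with hEdef
  have hE : ∀ t : ℝ, HasDerivAt E (r' t * (r'' t - G ^ 2 / (r t) ^ 3 + 1 / (r t) ^ 2)) t := by
    intro t
    have h1 : HasDerivAt (fun u => r' u ^ 2 / 2) (r' t * r'' t) t := by
      have := ((hd2 t).fun_pow 2).div_const 2
      refine this.congr_deriv ?_
      simp
      ring
    have h2 : HasDerivAt (fun u => ((r u) ^ 2)⁻¹)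
        (-((2 : ℕ) * r t ^ 1 * r' t) / ((r t) ^ 2) ^ 2) t :=
      ((hd1 t).pow 2).inv (pow_ne_zero 2 (hrpos t).ne')
    have h2' := h2.const_mul (G ^ 2 / 2)
    have h3 : HasDerivAt (fun u => (r u)⁻¹) (-(r' t) / (r t) ^ 2) t :=
      (hd1 t).inv (hrpos t).ne'
    have := (h1.add h2').sub h3
    refine this.congr_deriv ?_
    have hr0 := (hrpos t).ne'
    field_simp
    ring
  have hEc : Continuous E := continuous_iff_continuousAt.mpr fun t => (hE t).continuousAt
  have hEderiv : ∀ t : ℝ, deriv E t = r' t * (r'' t - G ^ 2 / (r t) ^ 3 + 1 / (r t) ^ 2) :=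
    fun t => (hE t).deriv
  -- limit of E at -∞
  have hElim : Tendsto E atBot (nhds 0) := by
    have t1 : Tendsto (fun t => r' t ^ 2 / 2) atBot (nhds 0) := by
      have hc : Tendsto (fun x : ℝ => x ^ 2 / 2) (nhds 0) (nhds 0) := by
        have := ((continuous_id.pow 2).div_const (2:ℝ)).tendsto 0
        simpa using this
      exact hc.comp hv2
    have t2 : Tendsto (fun t => G ^ 2 / 2 * ((r t) ^ 2)⁻¹) atBot (nhds 0) := by
      have h := tendsto_inv_atTop_zero.comp ((tendsto_pow_atTop (n := 2) (by norm_num)).comp hinf2)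
      have := h.const_mul (G ^ 2 / 2)
      simpa using this
    have t3 : Tendsto (fun t => (r t)⁻¹) atBot (nhds 0) := tendsto_inv_atTop_zero.comp hinf2
    have := (t1.add t2).sub t3
    simpa using this
  -- global minimum
  obtain ⟨s₁, hs₁⟩ : ∃ x, ∀ y, r x ≤ r y := by
    apply hrc.exists_forall_le
    rw [cocompact_eq_atBot_atTop]
    exact tendsto_sup.mpr ⟨hinf2, hinf1⟩
  have hr'₁ : r' s₁ = 0 := by
    have hmin : IsLocalMin r s₁ := Filter.Eventually.of_forall fun y => hs₁ y
    exact hmin.hasDerivAt_eq_zero (hd1 s₁)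
  -- main claim : E s₁ ≤ 0
  have hkey : E s₁ ≤ 0 := by
    set S : Set ℝ := {t | t ≤ s₁ ∧ 0 < r' t} with hSdef
    by_cases hS : S.Nonempty
    · -- case 2: a = sSup S
      have hbdd : BddAbove S := ⟨s₁, fun t ht => ht.1⟩
      set a : ℝ := sSup S with hadef
      have ha_le : a ≤ s₁ := csSup_le hS fun t ht => ht.1
      -- r' ≤ 0 on (a, s₁]
      have hr'le : ∀ x, a < x → x ≤ s₁ → r' x ≤ 0 := by
        intro x hax hxs
        by_contra h
        push_neg at h
        exact absurd (le_csSup hbdd ⟨hxs, h⟩) (not_le.mpr hax)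
      -- r' a = 0
      have hr'a_nonneg : 0 ≤ r' a := by
        by_contra h
        push_neg at h
        have hev : ∀ᶠ y in nhds a, r' y < 0 := (hr'c.continuousAt).eventually (gt_mem_nhds h)
        rw [Metric.eventually_nhds_iff] at hev
        obtain ⟨ε, hε, hev⟩ := hev
        obtain ⟨s₂, hs₂S, hs₂gt⟩ := exists_lt_of_lt_csSup hS (by linarith : a - ε < a)
        have hs₂le : s₂ ≤ a := le_csSup hbdd hs₂S
        have : dist s₂ a < ε := by
          rw [Real.dist_eq, abs_lt]
          constructor <;> linarith
        exact absurd hs₂S.2 (not_lt.mpr (hev this).le)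
      have hr'a : r' a = 0 := by
        rcases eq_or_lt_of_le ha_le with heq1 | hlt1
        · rw [heq1]; exact hr'₁
        · refine le_antisymm ?_ hr'a_nonneg
          by_contra h
          push_neg at h
          have hev : ∀ᶠ y in nhds a, 0 < r' y := (hr'c.continuousAt).eventually (lt_mem_nhds h)
          rw [Metric.eventually_nhds_iff] at hev
          obtain ⟨ε, hε, hev⟩ := hev
          set x := min (a + ε / 2) ((a + s₁) / 2) with hxdef
          have hx1 : a < x := lt_min (by linarith) (by linarith)
          have hx2 : x ≤ s₁ := le_trans (min_le_right _ _) (by linarith)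
          have hx3 : dist x a < ε := by
            rw [Real.dist_eq, abs_lt]
            constructor
            · have := min_le_left (a + ε / 2) ((a + s₁) / 2); linarith [hx1]
            · have := min_le_left (a + ε / 2) ((a + s₁) / 2); linarith
          exact absurd (hr'le x hx1 hx2) (not_le.mpr (hev hx3))
      -- r'' a ≤ 0
      have hr''a : r'' a ≤ 0 := by
        by_contra h
        push_neg at h
        have hslope : Tendsto (slope r' a) (nhdsWithin a {a}ᶜ) (nhds (r'' a)) :=
          hasDerivAt_iff_tendsto_slope.mp (hd2 a)
        have hev : ∀ᶠ y in nhdsWithin a {a}ᶜ, 0 < slope r' a y :=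
          hslope.eventually (lt_mem_nhds h)
        have hev' : ∀ᶠ y in nhdsWithin a (Set.Iio a), 0 < slope r' a y :=
          hev.filter_mono (nhdsWithin_mono a fun y hy => ne_of_lt hy)
        rw [Filter.eventually_iff, mem_nhdsLT_iff_exists_Ioo_subset] at hev'
        obtain ⟨l, hl, hsub⟩ := hev'
        obtain ⟨s₂, hs₂S, hs₂gt⟩ := exists_lt_of_lt_csSup hS hl
        have hs₂le : s₂ ≤ a := le_csSup hbdd hs₂S
        have hs₂ne : s₂ ≠ a := by
          intro hh
          rw [hh] at hs₂S
          exact absurd hs₂S.2 (not_lt.mpr hr'a.le)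
        have hs₂lt : s₂ < a := lt_of_le_of_ne hs₂le hs₂ne
        have hmem : s₂ ∈ Set.Ioo l a := ⟨hs₂gt, hs₂lt⟩
        have hpos := hsub hmem
        rw [Set.mem_setOf_eq, slope_def_field, hr'a] at hpos
        have : (r' s₂ - 0) / (s₂ - a) < 0 :=
          div_neg_of_pos_of_neg (by linarith [hs₂S.2]) (by linarith)
        linarith
      -- hence r a ≥ G²
      have hGa : G ^ 2 ≤ r a := by
        have h1 := hgnn a
        have h2 : G ^ 2 / (r a) ^ 3 ≤ 1 / (r a) ^ 2 := by linarith
        rw [div_le_div_iff₀ (pow_pos (hrpos a) 3) (pow_pos (hrpos a) 2)] at h2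
        have h3 : G ^ 2 * r a ^ 2 ≤ r a * r a ^ 2 := by nlinarith
        exact le_of_mul_le_mul_right h3 (pow_pos (hrpos a) 2)
      -- E a ≤ 0
      have hEa : E a ≤ 0 := by
        have hu := hrpos a
        have huv : r a * ((r a) ^ 2)⁻¹ = (r a)⁻¹ := by
          field_simp
        have hvpos : (0:ℝ) < ((r a) ^ 2)⁻¹ := inv_pos.mpr (pow_pos hu 2)
        have hinvpos : (0:ℝ) < (r a)⁻¹ := inv_pos.mpr hu
        have hmul : G ^ 2 * ((r a) ^ 2)⁻¹ ≤ r a * ((r a) ^ 2)⁻¹ :=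
          mul_le_mul_of_nonneg_right hGa hvpos.le
        rw [huv] at hmul
        simp only [hEdef, hr'a]
        nlinarith
      -- E antitone on [a, s₁]
      have hanti : AntitoneOn E (Set.Icc a s₁) := by
        apply antitoneOn_of_deriv_nonpos (convex_Icc a s₁) hEc.continuousOn
          (fun x _ => (hE x).differentiableAt.differentiableWithinAt)
        intro x hx
        rw [interior_Icc] at hx
        rw [hEderiv x]
        exact mul_nonpos_of_nonpos_of_nonneg (hr'le x hx.1 hx.2.le) (hgnn x)
      have := hanti (Set.left_mem_Icc.mpr ha_le) (Set.right_mem_Icc.mpr ha_le) ha_le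
      linarith
    · -- case 1: r' ≤ 0 on (-∞, s₁]
      have hr'le : ∀ x, x ≤ s₁ → r' x ≤ 0 := by
        intro x hx
        by_contra h
        push_neg at h
        exact hS ⟨x, hx, h⟩
      have hanti : AntitoneOn E (Set.Iic s₁) := by
        apply antitoneOn_of_deriv_nonpos (convex_Iic s₁) hEc.continuousOn
          (fun x _ => (hE x).differentiableAt.differentiableWithinAt)
        intro x hx
        rw [interior_Iic] at hx
        rw [hEderiv x]
        exact mul_nonpos_of_nonpos_of_nonneg (hr'le x hx.le) (hgnn x)
      have hev : ∀ᶠ x in atBot, E s₁ ≤ E x := by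
        filter_upwards [eventually_le_atBot s₁] with x hx
        exact hanti hx Set.self_mem_Iic hx
      exact ge_of_tendsto hElim hev
  -- conclude
  intro s
  have hm := hrpos s₁
  have hEs : E s₁ = G ^ 2 / 2 * ((r s₁) ^ 2)⁻¹ - (r s₁)⁻¹ := by
    simp only [hEdef, hr'₁]
    ring
  rw [hEs] at hkey
  have h1 : G ^ 2 / 2 * ((r s₁) ^ 2)⁻¹ ≤ (r s₁)⁻¹ := by linarith
  have h2 : G ^ 2 / 2 ≤ r s₁ := by
    have e1 : (r s₁) ^ 2 * ((r s₁) ^ 2)⁻¹ = 1 := mul_inv_cancel₀ (pow_ne_zero 2 hm.ne')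
    have e2 : (r s₁) * (r s₁)⁻¹ = 1 := mul_inv_cancel₀ hm.ne'
    nlinarith [inv_pos.mpr hm, inv_pos.mpr (pow_pos hm 2)]
  linarith [hs₁ s]
end

section
/- Let G ≠ 0 and suppose ṙ(s₀) = 0 and r̈(s₀) ≤ 0 for a solution of r̈ = G²/r³ − r/(r²+ρ²)^{3/2} with 0 ≤ ρ ≤ 1/2. Then the energy E(s₀) = ṙ(s₀)²/2 + G²/(2r(s₀)²) − 1/r(s₀) satisfies E(s₀) ≤ 0, and consequently r(s₀) ≥ G²/2. -/
theorem stmt7 (G R ρ v : ℝ) (hG : G ≠ 0) (hR : 0 < R)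
    (hρ0 : 0 ≤ ρ) (hρ : ρ ≤ 1 / 2) (hv : v = 0)
    (hacc : G ^ 2 / R ^ 3 - R / (R ^ 2 + ρ ^ 2) ^ ((3 : ℝ) / 2) ≤ 0) :
    v ^ 2 / 2 + G ^ 2 / (2 * R ^ 2) - 1 / R ≤ 0 ∧ G ^ 2 / 2 ≤ R := by
  have hR2 : (0:ℝ) < R ^ 2 := by positivity
  have hbase : (R:ℝ) ^ 2 ≤ R ^ 2 + ρ ^ 2 := by nlinarith
  have hpow : (R ^ 2 : ℝ) ^ ((3:ℝ)/2) ≤ (R ^ 2 + ρ ^ 2) ^ ((3:ℝ)/2) :=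
    Real.rpow_le_rpow (le_of_lt hR2) hbase (by norm_num)
  have hRcube : (R ^ 2 : ℝ) ^ ((3:ℝ)/2) = R ^ 3 := by
    rw [← Real.rpow_natCast R 2, ← Real.rpow_mul hR.le, ← Real.rpow_natCast R 3]
    norm_num
  rw [hRcube] at hpow
  have hpos : (0:ℝ) < R ^ 3 := by positivity
  have hpow0 : (0:ℝ) < (R ^ 2 + ρ ^ 2) ^ ((3:ℝ)/2) := by positivity
  have hfrac : R / (R ^ 2 + ρ ^ 2) ^ ((3:ℝ)/2) ≤ R / R ^ 3 :=
    div_le_div_of_nonneg_left hR.le hpos hpow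
  have h1 : G ^ 2 / R ^ 3 ≤ R / R ^ 3 := by
    have := hacc
    nlinarith [hfrac]
  have hG2R : G ^ 2 ≤ R := by
    have := (div_le_div_iff₀ hpos hpos).mp h1
    nlinarith
  constructor
  · subst hv
    have hE : G ^ 2 / (2 * R ^ 2) ≤ 1 / (2 * R) := by
      rw [div_le_div_iff₀ (by positivity) (by positivity)]
      nlinarith
    have : 1 / (2 * R) - 1 / R ≤ 0 := by
      rw [sub_nonpos, div_le_div_iff₀ (by positivity) hR]
      nlinarith
    nlinarith
  · nlinarith [sq_nonneg G]
end

section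
/- On every bounded set {‖φ‖ ≤ K} ⊂ D^{1,2}, the barycenter functional Bar(φ) = B₂(φ)/B₁(φ), where B₁(φ) = ∫_ℝ (1+(r_0+φ)²)^{-2} and B₂(φ) = ∫_ℝ s(1+(r_0+φ)²)^{-2}, is Lipschitz continuous: there exists L > 0 with |Bar(φ*) − Bar(φ)| ≤ L ‖φ* − φ‖_{D^{1,2}} for all ‖φ‖, ‖φ*‖ ≤ K. -/
/-!
On the `K`-ball of `D^{1,2}` every `φ` satisfies `|φ s| ≤ K (1 + √|s|)`, which is eventually
dominated by the growth `c (1 + |s|)^{2/3}` of `r0`; hence `(1 + (r0 + φ)²)⁻² ≲ (1 + |s|)^{-8/3}`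
uniformly on the ball, and the same decay bounds the derivative of `x ↦ (1 + x²)⁻²` between
`r0 + φ` and `r0 + ψ`. With `|ψ - φ| ≤ ‖ψ - φ‖ (1 + √|s|)` this makes `B₁` and `B₂` Lipschitz on the
ball, with the integrable weights `(1 + |s|)^{-13/6}` and `(1 + |s|)^{-7/6}`. Since `r0 + φ` is
uniformly bounded on `[0, 1]`, `B₁` is bounded away from zero, so the quotient is Lipschitz too.
-/

open MeasureTheory

/-- The `D^{1,2}` norm of `φ` with weak derivative `v`. -/
noncomputable def D12norm (φ v : ℝ → ℝ) : ℝ :=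
  Real.sqrt ((φ 0) ^ 2 + ∫ t : ℝ, (v t) ^ 2)

/-- The barycenter functional `Bar = B₂/B₁`. -/
noncomputable def Bar (r0 φ : ℝ → ℝ) : ℝ :=
  (∫ s : ℝ, s * ((1 + (r0 s + φ s) ^ 2) ^ 2)⁻¹) /
    ∫ s : ℝ, ((1 + (r0 s + φ s) ^ 2) ^ 2)⁻¹

open Set

lemma MeasureTheory.MemLp.intervalIntegrable {v : ℝ → ℝ} {p : ENNReal} (hv : MemLp v p volume)
    (hp : 1 ≤ p) (a b : ℝ) : IntervalIntegrable v volume a b :=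
  ((hv.locallyIntegrable hp).integrableOn_isCompact isCompact_uIcc).intervalIntegrable

lemma abs_intervalIntegral_le_sqrt_mul_sqrt {v : ℝ → ℝ} (hv : MemLp v 2 volume) (a b : ℝ) :
    |∫ t in a..b, v t| ≤ √|b - a| * √(∫ t, v t ^ 2) := by
  set μ := volume.restrict (uIoc a b)
  have hμ : μ univ = ENNReal.ofReal |b - a| := by
    rw [Measure.restrict_apply_univ, Real.volume_uIoc]
  have : IsFiniteMeasure μ := ⟨by rw [hμ]; exact ENNReal.ofReal_lt_top⟩
  have hone : MemLp (fun _ : ℝ => (1 : ℝ)) (ENNReal.ofReal 2) μ := memLp_const 1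
  have habs : MemLp (fun t => |v t|) (ENNReal.ofReal 2) μ := by
    simpa [Pi.abs_def] using (hv.restrict (uIoc a b)).abs
  have holder := integral_mul_le_Lp_mul_Lq_of_nonneg Real.HolderConjugate.two_two
    (Filter.Eventually.of_forall fun _ => zero_le_one)
    (Filter.Eventually.of_forall fun t => abs_nonneg (v t)) hone habs
  have hvol : ∫ _ : ℝ, (1 : ℝ) ^ (2 : ℝ) ∂μ = |b - a| := by
    simp [measureReal_def, hμ]
  have hsq : ∫ t, |v t| ^ (2 : ℝ) ∂μ ≤ ∫ t, v t ^ 2 := by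
    simp only [Real.rpow_two, sq_abs]
    exact setIntegral_le_integral hv.integrable_sq
      (Filter.Eventually.of_forall fun t => sq_nonneg _)
  calc |∫ t in a..b, v t| ≤ ∫ t, 1 * |v t| ∂μ := by
        simpa using intervalIntegral.norm_integral_le_integral_norm_uIoc (f := v)
    _ ≤ (∫ _ : ℝ, (1 : ℝ) ^ (2 : ℝ) ∂μ) ^ (1 / 2 : ℝ) * (∫ t, |v t| ^ (2 : ℝ) ∂μ) ^ (1 / 2 : ℝ) :=
        holder
    _ ≤ |b - a| ^ (1 / 2 : ℝ) * (∫ t, v t ^ 2) ^ (1 / 2 : ℝ) := by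
        rw [hvol]
        gcongr
    _ = √|b - a| * √(∫ t, v t ^ 2) := by rw [Real.sqrt_eq_rpow, Real.sqrt_eq_rpow]

lemma IsD12.sub {φ vφ ψ vψ : ℝ → ℝ} (hφ : IsD12 φ vφ) (hψ : IsD12 ψ vψ) :
    IsD12 (fun s => ψ s - φ s) (fun s => vψ s - vφ s) := by
  refine ⟨hψ.1.sub hφ.1, hψ.2.1.sub hφ.2.1, fun s => ?_⟩
  beta_reduce
  rw [intervalIntegral.integral_sub (hψ.2.1.intervalIntegrable one_le_two 0 s)
    (hφ.2.1.intervalIntegrable one_le_two 0 s), hφ.2.2 s, hψ.2.2 s]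
  ring

lemma D12norm_nonneg (φ v : ℝ → ℝ) : 0 ≤ D12norm φ v := Real.sqrt_nonneg _

lemma IsD12.abs_apply_le {φ v : ℝ → ℝ} (h : IsD12 φ v) (s : ℝ) :
    |φ s| ≤ D12norm φ v * (1 + √|s|) := by
  have hv : 0 ≤ ∫ t, v t ^ 2 := integral_nonneg fun t => sq_nonneg _
  have h0 : |φ 0| ≤ D12norm φ v := by
    rw [← Real.sqrt_sq_eq_abs]
    exact Real.sqrt_le_sqrt (by linarith)
  have hv' : √(∫ t, v t ^ 2) ≤ D12norm φ v := Real.sqrt_le_sqrt (by nlinarith [sq_nonneg (φ 0)])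
  have hint := abs_intervalIntegral_le_sqrt_mul_sqrt h.2.1 0 s
  rw [sub_zero] at hint
  calc |φ s| ≤ |φ 0| + |∫ t in (0 : ℝ)..s, v t| := by rw [h.2.2 s]; exact abs_add_le _ _
    _ ≤ D12norm φ v + √|s| * D12norm φ v := by gcongr; exact hint.trans (by gcongr)
    _ = D12norm φ v * (1 + √|s|) := by ring

lemma one_add_sqrt_abs_le (s : ℝ) : 1 + √|s| ≤ 2 * (1 + |s|) ^ (1 / 2 : ℝ) := by
  have h1 : √|s| ≤ (1 + |s|) ^ (1 / 2 : ℝ) := by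
    rw [← Real.sqrt_eq_rpow]
    exact Real.sqrt_le_sqrt (by linarith)
  have h2 : (1 : ℝ) ≤ (1 + |s|) ^ (1 / 2 : ℝ) :=
    Real.one_le_rpow (by linarith [abs_nonneg s]) (by norm_num)
  linarith

noncomputable def weight (x : ℝ) : ℝ := ((1 + x ^ 2) ^ 2)⁻¹

lemma Bar_eq (r0 φ : ℝ → ℝ) :
    Bar r0 φ = (∫ s, s * weight (r0 s + φ s)) / ∫ s, weight (r0 s + φ s) := rfl

lemma weight_pos (x : ℝ) : 0 < weight x := by unfold weight; positivity

lemma continuous_weight : Continuous weight :=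
  (continuous_const.add (continuous_pow 2)).pow 2 |>.inv₀ fun x =>
    (by positivity : (0 : ℝ) < (1 + x ^ 2) ^ 2).ne'

lemma weight_le_weight {x y : ℝ} (h : |x| ≤ |y|) : weight y ≤ weight x := by
  unfold weight
  have : x ^ 2 ≤ y ^ 2 := sq_le_sq.2 h
  gcongr

lemma hasDerivAt_weight (x : ℝ) : HasDerivAt weight (-(4 * x) * weight x ^ 2 * (1 + x ^ 2)) x := by
  have h : HasDerivAt (fun x : ℝ => ((1 + x ^ 2) ^ 2)⁻¹) _ x :=
    (((hasDerivAt_pow 2 x).const_add 1).fun_pow 2).fun_inv (by positivity)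
  refine h.congr_deriv ?_
  simp only [weight]
  field_simp
  ring

-- Equivalent to `4|x| ≤ 2 (1 + x²)`.
lemma abs_deriv_weight_le (x : ℝ) : |-(4 * x) * weight x ^ 2 * (1 + x ^ 2)| ≤ 2 * weight x := by
  have hu : (0 : ℝ) < 1 + x ^ 2 := by positivity
  rw [abs_mul, abs_mul, abs_of_pos (pow_pos (weight_pos x) 2), abs_of_pos hu, abs_neg,
    abs_mul, abs_of_pos four_pos]
  simp only [weight]
  field_simp
  nlinarith [sq_nonneg (|x| - 1), sq_abs x]

lemma abs_weight_sub_le {ℓ W a b : ℝ} (hW : ∀ x, ℓ ≤ x → weight x ≤ W) (ha : ℓ ≤ a) (hb : ℓ ≤ b) :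
    |weight a - weight b| ≤ 2 * W * |a - b| := by
  simpa [Real.norm_eq_abs] using (convex_Ici ℓ).norm_image_sub_le_of_norm_hasDerivWithin_le
    (fun x _ => (hasDerivAt_weight x).hasDerivWithinAt)
    (fun x hx => by
      rw [Real.norm_eq_abs]
      exact (abs_deriv_weight_le x).trans (by linarith [hW x hx]))
    hb ha

noncomputable def lowerEnvelope (c K s : ℝ) : ℝ := c * (1 + |s|) ^ (2 / 3 : ℝ) - K * (1 + √|s|)

-- With `y = (1 + |s|)^(1/6)` the lower envelope becomes the polynomial `c y⁴ - 2K y³`.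
lemma exists_pos_mul_pow_le_one_add_sq {c : ℝ} (hc : 0 < c) (K : ℝ) :
    ∃ ε > 0, ∀ x y : ℝ, 0 ≤ y → c * y ^ 4 - 2 * K * y ^ 3 ≤ x → ε * y ^ 8 ≤ 1 + x ^ 2 := by
  set A := max 1 ((4 * K / c) ^ 8)
  have hA : 0 < A := lt_max_of_lt_left one_pos
  refine ⟨min (c ^ 2 / 4) A⁻¹, by positivity, fun x y hy hx => ?_⟩
  rcases le_or_gt (4 * K) (c * y) with hy' | hy'
  · have hx' : c / 2 * y ^ 4 ≤ x := by nlinarith [pow_nonneg hy 3]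
    have : (c / 2 * y ^ 4) ^ 2 ≤ x ^ 2 := pow_le_pow_left₀ (by positivity) hx' 2
    nlinarith [min_le_left (c ^ 2 / 4) A⁻¹, pow_nonneg hy 8]
  · have hyA : y ^ 8 ≤ A :=
      (pow_le_pow_left₀ hy (by rw [le_div_iff₀ hc]; linarith) 8).trans (le_max_right _ _)
    calc min (c ^ 2 / 4) A⁻¹ * y ^ 8 ≤ A⁻¹ * A := by gcongr; exact min_le_right _ _
      _ = 1 := inv_mul_cancel₀ hA.ne'
      _ ≤ 1 + x ^ 2 := by nlinarith [sq_nonneg x]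

lemma exists_weight_le_of_lowerEnvelope_le {c : ℝ} (hc : 0 < c) {K : ℝ} (hK : 0 ≤ K) :
    ∃ A, ∀ s x, lowerEnvelope c K s ≤ x → weight x ≤ A * (1 + |s|) ^ (-(8 / 3) : ℝ) := by
  obtain ⟨ε, hε, hpoly⟩ := exists_pos_mul_pow_le_one_add_sq hc K
  refine ⟨(ε ^ 2)⁻¹, fun s x hx => ?_⟩
  have ht : 0 < 1 + |s| := by positivity
  set y := (1 + |s|) ^ (1 / 6 : ℝ)
  have hy : ∀ n : ℕ, (1 + |s|) ^ ((n : ℝ) / 6) = y ^ n := fun n => by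
    rw [← Real.rpow_mul_natCast ht.le]; ring_nf
  have hy0 : 0 ≤ y := by positivity
  have hx' : c * y ^ 4 - 2 * K * y ^ 3 ≤ x := by
    have h3 : 1 + √|s| ≤ 2 * y ^ 3 := by
      have := one_add_sqrt_abs_le s
      rwa [show (1 / 2 : ℝ) = ((3 : ℕ) : ℝ) / 6 by norm_num, hy] at this
    have h4 : (1 + |s|) ^ (2 / 3 : ℝ) = y ^ 4 := by
      rw [← hy]; norm_num
    unfold lowerEnvelope at hx
    rw [h4] at hx
    nlinarith
  have hsq := hpoly x y hy0 hx'
  calc weight x ≤ ((ε * y ^ 8) ^ 2)⁻¹ := by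
        unfold weight
        gcongr
    _ = (ε ^ 2)⁻¹ * (1 + |s|) ^ (-(8 / 3) : ℝ) := by
        rw [Real.rpow_neg ht.le, show (8 / 3 : ℝ) = ((16 : ℕ) : ℝ) / 6 by norm_num, hy]
        ring

noncomputable def decayIntegral (p : ℝ) : ℝ := ∫ s : ℝ, (1 + |s|) ^ (-p)

lemma integrable_one_add_abs_rpow_neg {p : ℝ} (hp : 1 < p) :
    Integrable fun s : ℝ => (1 + |s|) ^ (-p) :=
  integrable_one_add_norm (E := ℝ) (by simpa using hp)

section Decay

variable {F G : ℝ → ℝ} {A p : ℝ}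

lemma integrable_of_abs_le_rpow (hF : AEStronglyMeasurable F) (hp : 1 < p)
    (h : ∀ s, |F s| ≤ A * (1 + |s|) ^ (-p)) : Integrable F :=
  ((integrable_one_add_abs_rpow_neg hp).const_mul A).mono' hF (Filter.Eventually.of_forall h)

lemma abs_integral_le_of_abs_le_rpow (hp : 1 < p) (h : ∀ s, |F s| ≤ A * (1 + |s|) ^ (-p)) :
    |∫ s, F s| ≤ A * decayIntegral p := by
  rw [decayIntegral, ← integral_const_mul]
  exact norm_integral_le_of_norm_le (f := F) ((integrable_one_add_abs_rpow_neg hp).const_mul A)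
    (Filter.Eventually.of_forall h)

lemma abs_mul_le_rpow_of_abs_le_rpow (h : ∀ s, |F s| ≤ A * (1 + |s|) ^ (-p)) (s : ℝ) :
    |s * F s| ≤ A * (1 + |s|) ^ (-(p - 1)) := by
  have ht : 0 < 1 + |s| := by positivity
  calc |s * F s| ≤ (1 + |s|) * (A * (1 + |s|) ^ (-p)) := by
        rw [abs_mul]
        exact mul_le_mul (by linarith) (h s) (abs_nonneg _) ht.le
    _ = A * (1 + |s|) ^ (-(p - 1)) := by
        rw [show -(p - 1) = 1 + -p by ring, Real.rpow_add ht, Real.rpow_one]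
        ring

lemma abs_div_sub_div_le {a a' b b' β M N Δa Δb : ℝ} (hβ : 0 < β) (hb : β ≤ b) (hb' : β ≤ b')
    (hbN : b ≤ N) (haM : |a| ≤ M) (ha' : |a' - a| ≤ Δa) (hb'' : |b' - b| ≤ Δb) :
    |a' / b' - a / b| ≤ (N * Δa + M * Δb) / β ^ 2 := by
  have hb0 : 0 < b := hβ.trans_le hb
  have hb0' : 0 < b' := hβ.trans_le hb'
  have hnum : |(a' - a) * b - a * (b' - b)| ≤ N * Δa + M * Δb := by
    calc |(a' - a) * b - a * (b' - b)| ≤ |(a' - a) * b| + |a * (b' - b)| := abs_sub _ _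
      _ = |a' - a| * b + |a| * |b' - b| := by rw [abs_mul, abs_mul, abs_of_pos hb0]
      _ ≤ Δa * N + M * Δb := by
          gcongr
          · exact (abs_nonneg _).trans ha'
          · exact (abs_nonneg _).trans haM
      _ = N * Δa + M * Δb := by ring
  rw [div_sub_div _ _ hb0'.ne' hb0.ne', show a' * b - b' * a = (a' - a) * b - a * (b' - b) by ring,
    abs_div, abs_of_pos (mul_pos hb0' hb0)]
  calc |(a' - a) * b - a * (b' - b)| / (b' * b) ≤ |(a' - a) * b - a * (b' - b)| / β ^ 2 := by
        gcongr
        nlinarith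
    _ ≤ (N * Δa + M * Δb) / β ^ 2 := by gcongr

lemma abs_moment_div_sub_le {q D β : ℝ} (hF : AEStronglyMeasurable F) (hG : AEStronglyMeasurable G)
    (hp : 2 < p) (hq : 2 < q) (hFA : ∀ s, |F s| ≤ A * (1 + |s|) ^ (-p))
    (hGA : ∀ s, |G s| ≤ A * (1 + |s|) ^ (-p)) (hGF : ∀ s, |G s - F s| ≤ D * (1 + |s|) ^ (-q))
    (hβ : 0 < β) (hβF : β ≤ ∫ s, F s) (hβG : β ≤ ∫ s, G s) :
    |(∫ s, s * G s) / (∫ s, G s) - (∫ s, s * F s) / ∫ s, F s| ≤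
      (A * decayIntegral p * (D * decayIntegral (q - 1)) +
        A * decayIntegral (p - 1) * (D * decayIntegral q)) / β ^ 2 := by
  have hp1 : 1 < p := by linarith
  have hp2 : 1 < p - 1 := by linarith
  have hmoment {H : ℝ → ℝ} (hH : AEStronglyMeasurable H) (hHA : ∀ s, |H s| ≤ A * (1 + |s|) ^ (-p)) :
      Integrable H ∧ Integrable fun s => s * H s :=
    ⟨integrable_of_abs_le_rpow hH hp1 hHA,
      integrable_of_abs_le_rpow (aestronglyMeasurable_id.mul hH) hp2
        (abs_mul_le_rpow_of_abs_le_rpow hHA)⟩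
  obtain ⟨hFi, hsFi⟩ := hmoment hF hFA
  obtain ⟨hGi, hsGi⟩ := hmoment hG hGA
  refine abs_div_sub_div_le hβ hβF hβG
    ((le_abs_self _).trans (abs_integral_le_of_abs_le_rpow hp1 hFA))
    (abs_integral_le_of_abs_le_rpow hp2 (abs_mul_le_rpow_of_abs_le_rpow hFA)) ?_ ?_
  · rw [← integral_sub hsGi hsFi]
    refine abs_integral_le_of_abs_le_rpow (by linarith) fun s => ?_
    rw [← mul_sub]
    exact abs_mul_le_rpow_of_abs_le_rpow hGF s
  · rw [← integral_sub hGi hFi]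
    exact abs_integral_le_of_abs_le_rpow (by linarith) hGF

end Decay

section Profile

variable {r0 χ v φ vφ ψ vψ : ℝ → ℝ} {c K A : ℝ}

lemma IsD12.lowerEnvelope_le_add (hlow : ∀ s, c * (1 + |s|) ^ (2 / 3 : ℝ) ≤ r0 s)
    (h : IsD12 χ v) (hK : D12norm χ v ≤ K) (s : ℝ) : lowerEnvelope c K s ≤ r0 s + χ s := by
  have := (abs_le.1 ((h.abs_apply_le s).trans (mul_le_mul_of_nonneg_right hK (by positivity)))).1
  unfold lowerEnvelope
  linarith [hlow s]

lemma IsD12.abs_weight_add_le (hlow : ∀ s, c * (1 + |s|) ^ (2 / 3 : ℝ) ≤ r0 s)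
    (hw : ∀ s x, lowerEnvelope c K s ≤ x → weight x ≤ A * (1 + |s|) ^ (-(8 / 3) : ℝ))
    (h : IsD12 χ v) (hK : D12norm χ v ≤ K) (s : ℝ) :
    |weight (r0 s + χ s)| ≤ A * (1 + |s|) ^ (-(8 / 3) : ℝ) := by
  rw [abs_of_pos (weight_pos _)]
  exact hw s _ (h.lowerEnvelope_le_add hlow hK s)

lemma abs_weight_add_sub_le (hlow : ∀ s, c * (1 + |s|) ^ (2 / 3 : ℝ) ≤ r0 s)
    (hw : ∀ s x, lowerEnvelope c K s ≤ x → weight x ≤ A * (1 + |s|) ^ (-(8 / 3) : ℝ))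
    (hφ : IsD12 φ vφ) (hψ : IsD12 ψ vψ) (hφK : D12norm φ vφ ≤ K) (hψK : D12norm ψ vψ ≤ K)
    (s : ℝ) :
    |weight (r0 s + ψ s) - weight (r0 s + φ s)| ≤
      4 * A * D12norm (fun s => ψ s - φ s) (fun s => vψ s - vφ s) *
        (1 + |s|) ^ (-(13 / 6) : ℝ) := by
  set δ := D12norm (fun s => ψ s - φ s) (fun s => vψ s - vφ s)
  have ht : 0 < 1 + |s| := by positivity
  have hW : 0 ≤ A * (1 + |s|) ^ (-(8 / 3) : ℝ) :=
    (abs_nonneg _).trans (hψ.abs_weight_add_le hlow hw hψK s)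
  calc |weight (r0 s + ψ s) - weight (r0 s + φ s)|
      ≤ 2 * (A * (1 + |s|) ^ (-(8 / 3) : ℝ)) * |r0 s + ψ s - (r0 s + φ s)| :=
        abs_weight_sub_le (hw s) (hψ.lowerEnvelope_le_add hlow hψK s)
          (hφ.lowerEnvelope_le_add hlow hφK s)
    _ ≤ 2 * (A * (1 + |s|) ^ (-(8 / 3) : ℝ)) * (δ * (2 * (1 + |s|) ^ (1 / 2 : ℝ))) := by
        rw [add_sub_add_left_eq_sub]
        gcongr
        exact ((hφ.sub hψ).abs_apply_le s).trans
          (mul_le_mul_of_nonneg_left (one_add_sqrt_abs_le s) (D12norm_nonneg _ _))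
    _ = 4 * A * δ * (1 + |s|) ^ (-(13 / 6) : ℝ) := by
        rw [show (-(13 / 6) : ℝ) = -(8 / 3) + 1 / 2 by norm_num, Real.rpow_add ht]
        ring

lemma exists_le_integral_weight_add (hr0 : Continuous r0) (K : ℝ) :
    ∃ β > 0, ∀ χ v, IsD12 χ v → D12norm χ v ≤ K → Integrable (fun s => weight (r0 s + χ s)) →
      β ≤ ∫ s, weight (r0 s + χ s) := by
  obtain ⟨R, hR⟩ :=
    (isCompact_Icc (a := (0 : ℝ)) (b := 1)).exists_bound_of_continuousOn hr0.continuousOn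
  refine ⟨weight (R + 2 * K), weight_pos _, fun χ v h hK hint => ?_⟩
  have hbound : ∀ s ∈ Icc (0 : ℝ) 1, weight (R + 2 * K) ≤ weight (r0 s + χ s) := by
    intro s hs
    have hs1 : √|s| ≤ 1 := Real.sqrt_le_one.mpr (abs_le.2 ⟨by linarith [hs.1], hs.2⟩)
    have hχ : |χ s| ≤ 2 * K :=
      (h.abs_apply_le s).trans (by nlinarith [D12norm_nonneg χ v, Real.sqrt_nonneg |s|])
    apply weight_le_weight
    exact (abs_add_le _ _).trans ((add_le_add (by simpa using hR s hs) hχ).trans (le_abs_self _))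
  calc weight (R + 2 * K) = volume.real (Icc (0 : ℝ) 1) • weight (R + 2 * K) := by simp
    _ ≤ ∫ s in Icc 0 1, weight (r0 s + χ s) :=
        setIntegral_ge_of_const_le measurableSet_Icc (by simp) hbound hint.integrableOn
    _ ≤ ∫ s, weight (r0 s + χ s) :=
        setIntegral_le_integral hint (Filter.Eventually.of_forall fun s => (weight_pos _).le)

end Profile

theorem stmt10_general (r0 : ℝ → ℝ) (c : ℝ) (hc : 0 < c)
    (hr0c : Continuous r0)
    (hlow : ∀ s : ℝ, c * (1 + |s|) ^ ((2 : ℝ) / 3) ≤ r0 s) :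
    ∀ K : ℝ, 0 < K → ∃ L : ℝ, 0 < L ∧
      ∀ φ vφ ψ vψ : ℝ → ℝ, IsD12 φ vφ → IsD12 ψ vψ →
        D12norm φ vφ ≤ K → D12norm ψ vψ ≤ K →
        |Bar r0 ψ - Bar r0 φ| ≤
          L * D12norm (fun s => ψ s - φ s) (fun s => vψ s - vφ s) := by
  intro K hK
  obtain ⟨A, hw⟩ := exists_weight_le_of_lowerEnvelope_le hc hK.le
  obtain ⟨β, hβ, hβle⟩ := exists_le_integral_weight_add hr0c K
  set L₀ := (A * decayIntegral (8 / 3) * (4 * A * decayIntegral (13 / 6 - 1)) +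
    A * decayIntegral (8 / 3 - 1) * (4 * A * decayIntegral (13 / 6))) / β ^ 2
  refine ⟨max L₀ 1, lt_max_of_lt_right one_pos, fun φ vφ ψ vψ hφ hψ hφK hψK => ?_⟩
  have hmeas {χ v : ℝ → ℝ} (h : IsD12 χ v) : AEStronglyMeasurable fun s => weight (r0 s + χ s) :=
    (continuous_weight.comp (hr0c.add h.1)).aestronglyMeasurable
  have hφA := hφ.abs_weight_add_le hlow hw hφK
  have hψA := hψ.abs_weight_add_le hlow hw hψK
  have hβφ := hβle φ vφ hφ hφK (integrable_of_abs_le_rpow (hmeas hφ) (by norm_num) hφA)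
  have hβψ := hβle ψ vψ hψ hψK (integrable_of_abs_le_rpow (hmeas hψ) (by norm_num) hψA)
  rw [Bar_eq, Bar_eq]
  calc _ ≤ _ := abs_moment_div_sub_le (hmeas hφ) (hmeas hψ) (by norm_num) (by norm_num) hφA hψA
        (abs_weight_add_sub_le hlow hw hφ hψ hφK hψK) hβ hβφ hβψ
    _ = L₀ * D12norm (fun s => ψ s - φ s) (fun s => vψ s - vφ s) := by ring
    _ ≤ _ := mul_le_mul_of_nonneg_right (le_max_left _ _) (D12norm_nonneg _ _)

theorem stmt10 (r0 : ℝ → ℝ) (c C : ℝ) (hc : 0 < c) (hC : 0 < C)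
    (hr0c : Continuous r0)
    (hlow : ∀ s : ℝ, c * (1 + |s|) ^ ((2 : ℝ) / 3) ≤ r0 s)
    (hup : ∀ s : ℝ, r0 s ≤ C * (1 + |s|) ^ ((2 : ℝ) / 3)) :
    ∀ K : ℝ, 0 < K → ∃ L : ℝ, 0 < L ∧
      ∀ φ vφ ψ vψ : ℝ → ℝ, IsD12 φ vφ → IsD12 ψ vψ →
        D12norm φ vφ ≤ K → D12norm ψ vψ ≤ K →
        |Bar r0 ψ - Bar r0 φ| ≤
          L * D12norm (fun s => ψ s - φ s) (fun s => vψ s - vφ s) :=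
  stmt10_general r0 c hc hr0c hlow
end
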